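/- Let n ≥ 2 be an even integer, and let G be the 4-graph on 2n vertices whose vertex set is the disjoint union of sets A and B with |A| = |B| = n, and whose edges are all 4-element vertex sets intersecting A in exactly two vertices. Then G is 2-chromatic, and for every real p ≥ 2, λ^(p)(G) > ((n−1)^2 / (8n)) · |λ_min^(p)(G)|. In particular, the ratio λ^(p)(G)/|λ_min^(p)(G)| of these 2-chromatic 4-graphs grows at least linearly in n and thus cannot be bounded above by any function of the chromatic number and p. -/

import Mathlib

/-!
With `S = ∑ xᵢ` and `Q = ∑ xᵢ²` taken over each side, the form factorises as
`P(x) = 6 (S_A² - Q_A) (S_B² - Q_B)`, each factor being twice the second elementary symmetric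
polynomial. By Cauchy–Schwarz each factor lies in `[-Q, (n - 1) Q]`, and on the unit `ℓ^p`
sphere the power-mean inequality together with AM–GM gives `Q_A Q_B ≤ n² t⁴`, where
`t = (2n)^(-1/p)` is the coordinate of the constant unit vector. Hence
`λ^(p) = 6 (n - 1)² n² t⁴`, attained at that constant vector, while
`-6 (n - 1) n² t⁴ ≤ λ_min^(p) ≤ 0`, the upper bound coming from a unit vector supported on `A`.
So `λ^(p) ≥ (n - 1) |λ_min^(p)|`, and `n - 1 > (n - 1)² / (8n)`. The partition `A ∪ B` is a proper
2-colouring since every edge meets both sides.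
-/

open Finset

/-- Polynomial form of a weighted `r`-graph with edge set `E` and weights `w`:
`P(x) = r! * ∑_{e ∈ E} w(e) * ∏_{i ∈ e} x i`. -/
noncomputable def polyForm (r : ℕ) {V : Type*} (E : Finset (Finset V))
    (w : Finset V → ℝ) (x : V → ℝ) : ℝ :=
  (r.factorial : ℝ) * ∑ e ∈ E, w e * ∏ i ∈ e, x i

/-- The ℓ^p norm of a vector. -/
noncomputable def lpNorm (p : ℝ) {V : Type*} [Fintype V] (x : V → ℝ) : ℝ :=
  (∑ i, |x i| ^ p) ^ (1 / p)

/-- `λ^(p)(G_w)`: the maximum of the polynomial form over the unit ℓ^p sphere. -/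
noncomputable def lamMax (r : ℕ) (p : ℝ) {V : Type*} [Fintype V]
    (E : Finset (Finset V)) (w : Finset V → ℝ) : ℝ :=
  sSup {t | ∃ x : V → ℝ, lpNorm p x = 1 ∧ polyForm r E w x = t}

/-- `λ_min^(p)(G_w)`: the minimum of the polynomial form over the unit ℓ^p sphere. -/
noncomputable def lamMin (r : ℕ) (p : ℝ) {V : Type*} [Fintype V]
    (E : Finset (Finset V)) (w : Finset V → ℝ) : ℝ :=
  sInf {t | ∃ x : V → ℝ, lpNorm p x = 1 ∧ polyForm r E w x = t}

/-- Edge set of the complete `r`-graph `K_k^r` on vertex set `Fin k`. -/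
def completeEdges (r k : ℕ) : Finset (Finset (Fin k)) :=
  Finset.univ.powersetCard r

/-- The `4`-graph of Section 2 of the paper: the vertex set is the disjoint union
`A ⊕ B` of two sets of size `n` (`A` = left copy of `Fin n`, `B` = right copy), and
the edges are all `4`-element vertex sets intersecting `A` in exactly two vertices. -/
def crossEdges (n : ℕ) : Finset (Finset (Fin n ⊕ Fin n)) :=
  (Finset.univ.powersetCard 4).filter
    (fun e => (e.filter (fun v => v.isLeft = true)).card = 2)

section Analysis

variable {ι : Type*}

theorem two_mul_sum_powersetCard_two_prod [Fintype ι] {R : Type*} [CommRing R] (y : ι → R) :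
    2 * ∑ t ∈ univ.powersetCard 2, ∏ i ∈ t, y i = (∑ i, y i) ^ 2 - ∑ i, y i ^ 2 := by
  have h := congrArg (MvPolynomial.aeval y) (MvPolynomial.mul_esymm_eq_sum ι ℤ 2)
  rw [show {a ∈ antidiagonal 2 | a.1 < 2} = {(0, 2), (1, 1)} by decide] at h
  simpa [MvPolynomial.esymm, MvPolynomial.psum, powersetCard_one, sq, ← sub_eq_add_neg,
    show (-1 : R) ^ 3 = -1 by norm_num] using h

theorem sq_sum_sub_sum_sq_mem_Icc [Fintype ι] (y : ι → ℝ) :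
    (∑ i, y i) ^ 2 - ∑ i, y i ^ 2 ∈
      Set.Icc (-∑ i, y i ^ 2) (((Fintype.card ι : ℝ) - 1) * ∑ i, y i ^ 2) := by
  have := sq_sum_le_card_mul_sum_sq (s := univ) (f := y)
  rw [card_univ] at this
  constructor <;> nlinarith [sq_nonneg (∑ i, y i)]

theorem sum_sq_rpow_le (s : Finset ι) (y : ι → ℝ) {p : ℝ} (hp : 2 ≤ p) :
    (∑ i ∈ s, y i ^ 2) ^ (p / 2) ≤ (#s : ℝ) ^ (p / 2 - 1) * ∑ i ∈ s, |y i| ^ p := by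
  have hpow : ∀ i, (y i ^ 2) ^ (p / 2) = |y i| ^ p := fun i => by
    rw [← sq_abs, ← Real.rpow_natCast, ← Real.rpow_mul (abs_nonneg _)]
    ring_nf
  simpa only [hpow] using Real.rpow_sum_le_const_mul_sum_rpow_of_nonneg s
    (by linarith : 1 ≤ p / 2) (fun i _ => sq_nonneg (y i))

theorem sum_sq_mul_sum_sq_le [Fintype ι] [Nonempty ι] {p t : ℝ} (hp : 2 ≤ p) (ht : 0 ≤ t)
    (htp : t ^ p = (2 * Fintype.card ι : ℝ)⁻¹) (y z : ι → ℝ)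
    (hyz : ∑ i, |y i| ^ p + ∑ i, |z i| ^ p = 1) :
    (∑ i, y i ^ 2) * ∑ i, z i ^ 2 ≤ (Fintype.card ι : ℝ) ^ 2 * t ^ 4 := by
  set n : ℝ := (Fintype.card ι : ℝ)
  have hn : 0 < n := by positivity
  have hq : 0 < p / 2 := by linarith
  set α := ∑ i, |y i| ^ p
  set β := ∑ i, |z i| ^ p
  have hα : 0 ≤ α := sum_nonneg fun i _ => by positivity
  have hβ : 0 ≤ β := sum_nonneg fun i _ => by positivity
  have hy := sum_sq_rpow_le univ y hp
  have hz := sum_sq_rpow_le univ z hp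
  rw [card_univ] at hy hz
  have hαβ : α * β ≤ 1 / 4 := by nlinarith [sq_nonneg (α - β)]
  have hrhs : ((n ^ 2 * t ^ 4) ^ (p / 2)) = (n ^ (p / 2 - 1)) ^ 2 / 4 := by
    have htp2 : (t ^ (p / 2)) ^ 2 = t ^ p := by
      rw [← Real.rpow_natCast, ← Real.rpow_mul ht]
      ring_nf
    rw [Real.mul_rpow (by positivity) (by positivity), ← Real.rpow_pow_comm hn.le,
      ← Real.rpow_pow_comm ht, show 4 = 2 * 2 by rfl, pow_mul, htp2, htp,
      Real.rpow_sub_one hn.ne']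
    field_simp
    ring
  -- Compare `p / 2`-th powers: power means on each factor, then `α β ≤ 1 / 4`.
  rw [← Real.rpow_le_rpow_iff (by positivity) (by positivity) hq,
    Real.mul_rpow (by positivity) (by positivity), hrhs]
  calc (∑ i, y i ^ 2) ^ (p / 2) * (∑ i, z i ^ 2) ^ (p / 2)
      ≤ (n ^ (p / 2 - 1) * α) * (n ^ (p / 2 - 1) * β) :=
        mul_le_mul hy hz (by positivity) (by positivity)
    _ = (n ^ (p / 2 - 1)) ^ 2 * (α * β) := by ring
    _ ≤ (n ^ (p / 2 - 1)) ^ 2 / 4 := by nlinarith [sq_nonneg (n ^ (p / 2 - 1))]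

theorem mul_mem_Icc_of_mem_Icc {a b q r c : ℝ} (hq : 0 ≤ q) (hr : 0 ≤ r) (hc : 1 ≤ c)
    (ha : a ∈ Set.Icc (-q) (c * q)) (hb : b ∈ Set.Icc (-r) (c * r)) :
    a * b ∈ Set.Icc (-(c * (q * r))) (c ^ 2 * (q * r)) := by
  obtain ⟨ha₁, ha₂⟩ := ha
  obtain ⟨hb₁, hb₂⟩ := hb
  have hqr := mul_nonneg hq hr
  have hc2 : q * r ≤ c ^ 2 * (q * r) := le_mul_of_one_le_left hqr (by nlinarith)
  constructor <;>
    rcases le_total 0 a with h | h <;> rcases le_total 0 b with h' | h' <;> nlinarith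

end Analysis

section SphericalExtrema

variable {r : ℕ} {p : ℝ} {V : Type*} [Fintype V] {E : Finset (Finset V)} {w : Finset V → ℝ}

theorem lpNorm_eq_one_iff (hp : 0 < p) {x : V → ℝ} : lpNorm p x = 1 ↔ ∑ i, |x i| ^ p = 1 := by
  have h := Real.rpow_left_inj (x := ∑ i, |x i| ^ p) (sum_nonneg fun i _ => by positivity)
    zero_le_one (one_div_pos.2 hp).ne'
  rwa [Real.one_rpow] at h

theorem lamMax_eq_of_forall_le {M : ℝ} (hle : ∀ x, lpNorm p x = 1 → polyForm r E w x ≤ M)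
    (hM : ∃ x, lpNorm p x = 1 ∧ polyForm r E w x = M) : lamMax r p E w = M :=
  IsGreatest.csSup_eq ⟨hM, by rintro _ ⟨x, hx, rfl⟩; exact hle x hx⟩

theorem abs_lamMin_le {m : ℝ} (hle : ∀ x, lpNorm p x = 1 → -m ≤ polyForm r E w x)
    (h₀ : ∃ x, lpNorm p x = 1 ∧ polyForm r E w x = 0) : |lamMin r p E w| ≤ m := by
  have hbdd : BddBelow {t | ∃ x, lpNorm p x = 1 ∧ polyForm r E w x = t} :=
    ⟨-m, by rintro _ ⟨x, hx, rfl⟩; exact hle x hx⟩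
  have hmin_nonpos : lamMin r p E w ≤ 0 := csInf_le hbdd h₀
  have hm : 0 ≤ m := by obtain ⟨x, hx, hx₀⟩ := h₀; linarith [hle x hx]
  refine abs_le.2 ⟨le_csInf ⟨0, h₀⟩ ?_, hmin_nonpos.trans hm⟩
  rintro _ ⟨x, hx, rfl⟩
  exact hle x hx

end SphericalExtrema

section CrossEdges

variable {n : ℕ}

theorem mem_crossEdges_iff {e : Finset (Fin n ⊕ Fin n)} :
    e ∈ crossEdges n ↔ e.toLeft.card = 2 ∧ e.toRight.card = 2 := by
  have hleft :
      e.filter (fun v => v.isLeft = true) = e.toLeft.map ⟨Sum.inl, Sum.inl_injective⟩ := by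
    ext v
    cases v <;> simp
  rw [crossEdges, mem_filter, mem_powersetCard_univ, hleft, card_map]
  have := card_toLeft_add_card_toRight (u := e)
  omega

theorem disjSum_mem_crossEdges {s t : Finset (Fin n)} (hs : s.card = 2) (ht : t.card = 2) :
    s.disjSum t ∈ crossEdges n := by
  simpa [mem_crossEdges_iff] using ⟨hs, ht⟩

theorem exists_inl_mem_and_inr_mem {e : Finset (Fin n ⊕ Fin n)} (he : e ∈ crossEdges n) :
    (∃ a, Sum.inl a ∈ e) ∧ ∃ b, Sum.inr b ∈ e := by
  rw [mem_crossEdges_iff] at he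
  obtain ⟨a, ha⟩ := card_pos.1 (by omega : 0 < e.toLeft.card)
  obtain ⟨b, hb⟩ := card_pos.1 (by omega : 0 < e.toRight.card)
  exact ⟨⟨a, mem_toLeft.1 ha⟩, ⟨b, mem_toRight.1 hb⟩⟩

theorem sum_crossEdges_prod {R : Type*} [CommRing R] (x : Fin n ⊕ Fin n → R) :
    ∑ e ∈ crossEdges n, ∏ i ∈ e, x i =
      (∑ s ∈ univ.powersetCard 2, ∏ a ∈ s, x (Sum.inl a)) *
        ∑ t ∈ univ.powersetCard 2, ∏ b ∈ t, x (Sum.inr b) := by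
  rw [sum_mul_sum, ← sum_product']
  refine sum_nbij' (fun e => (e.toLeft, e.toRight)) (fun st => st.1.disjSum st.2)
    ?_ ?_ ?_ ?_ ?_
  · intro e he
    simpa [mem_crossEdges_iff] using he
  · intro st hst
    simp only [mem_product, mem_powersetCard_univ] at hst
    exact disjSum_mem_crossEdges hst.1 hst.2
  · intro e _
    exact toLeft_disjSum_toRight
  · intro st _
    simp
  · intro e _
    conv_lhs => rw [← toLeft_disjSum_toRight (u := e)]
    rw [prod_disjSum]

theorem polyForm_crossEdges (x : Fin n ⊕ Fin n → ℝ) :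
    polyForm 4 (crossEdges n) (fun _ => 1) x =
      6 * (((∑ a, x (Sum.inl a)) ^ 2 - ∑ a, x (Sum.inl a) ^ 2) *
        ((∑ b, x (Sum.inr b)) ^ 2 - ∑ b, x (Sum.inr b) ^ 2)) := by
  rw [polyForm, ← two_mul_sum_powersetCard_two_prod, ← two_mul_sum_powersetCard_two_prod]
  simp only [one_mul, sum_crossEdges_prod, Nat.factorial]
  ring

theorem polyForm_crossEdges_mem_Icc (hn : 2 ≤ n) {p t : ℝ} (hp : 2 ≤ p) (ht : 0 ≤ t)
    (htp : t ^ p = (2 * n : ℝ)⁻¹) {x : Fin n ⊕ Fin n → ℝ} (hx : lpNorm p x = 1) :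
    polyForm 4 (crossEdges n) (fun _ => 1) x ∈
      Set.Icc (-(6 * ((n - 1) * (n ^ 2 * t ^ 4)))) (6 * ((n - 1) ^ 2 * (n ^ 2 * t ^ 4))) := by
  have : Nonempty (Fin n) := ⟨⟨0, by omega⟩⟩
  have hsum : ∑ a, |x (Sum.inl a)| ^ p + ∑ b, |x (Sum.inr b)| ^ p = 1 := by
    rw [← (lpNorm_eq_one_iff (by linarith)).1 hx, Fintype.sum_sum_type]
  have hQ := sum_sq_mul_sum_sq_le hp ht (by simpa using htp) _ _ hsum
  have hA := sq_sum_sub_sum_sq_mem_Icc (x ∘ Sum.inl)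
  have hB := sq_sum_sub_sum_sq_mem_Icc (x ∘ Sum.inr)
  simp only [Function.comp_apply, Fintype.card_fin] at hA hB hQ
  have hc : (1 : ℝ) ≤ n - 1 := by
    have : (2 : ℝ) ≤ n := by exact_mod_cast hn
    linarith
  obtain ⟨hlow, hupp⟩ := mul_mem_Icc_of_mem_Icc (sum_nonneg fun _ _ => sq_nonneg _)
    (sum_nonneg fun _ _ => sq_nonneg _) hc hA hB
  rw [polyForm_crossEdges]
  constructor <;> nlinarith

theorem polyForm_crossEdges_const (t : ℝ) :
    polyForm 4 (crossEdges n) (fun _ => 1) (fun _ => t) =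
      6 * ((n - 1) ^ 2 * (n ^ 2 * t ^ 4)) := by
  rw [polyForm_crossEdges]
  simp only [sum_const, card_univ, Fintype.card_fin, nsmul_eq_mul]
  ring

theorem polyForm_crossEdges_single_inl (a : Fin n) :
    polyForm 4 (crossEdges n) (fun _ => 1) (Pi.single (Sum.inl a) 1) = 0 := by
  rw [polyForm_crossEdges]
  simp

theorem lamMax_crossEdges (hn : 2 ≤ n) {p t : ℝ} (hp : 2 ≤ p) (ht : 0 ≤ t)
    (htp : t ^ p = (2 * n : ℝ)⁻¹) :
    lamMax 4 p (crossEdges n) (fun _ => 1) = 6 * ((n - 1) ^ 2 * (n ^ 2 * t ^ 4)) := by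
  refine lamMax_eq_of_forall_le (fun x hx => (polyForm_crossEdges_mem_Icc hn hp ht htp hx).2)
    ⟨_, (lpNorm_eq_one_iff (by linarith)).2 ?_, polyForm_crossEdges_const t⟩
  simp only [abs_of_nonneg ht, htp, sum_const, card_univ, Fintype.card_sum, Fintype.card_fin,
    nsmul_eq_mul, Nat.cast_add]
  field_simp
  ring

theorem abs_lamMin_crossEdges_le (hn : 2 ≤ n) {p t : ℝ} (hp : 2 ≤ p) (ht : 0 ≤ t)
    (htp : t ^ p = (2 * n : ℝ)⁻¹) :
    |lamMin 4 p (crossEdges n) (fun _ => 1)| ≤ 6 * ((n - 1) * (n ^ 2 * t ^ 4)) := by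
  refine abs_lamMin_le (fun x hx => (polyForm_crossEdges_mem_Icc hn hp ht htp hx).1)
    ⟨_, (lpNorm_eq_one_iff (by linarith)).2 ?_, polyForm_crossEdges_single_inl ⟨0, by omega⟩⟩
  simp [Pi.single_apply, apply_ite, Real.zero_rpow (by linarith : p ≠ 0)]

end CrossEdges

theorem crossEdges_two_chromatic_ratio_unbounded_general (n : ℕ) (h2 : 2 ≤ n) :
    ((∃ f : Fin n ⊕ Fin n → Fin 2,
        ∀ e ∈ crossEdges n, ¬ ∀ u ∈ e, ∀ v ∈ e, f u = f v) ∧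
      ¬ ∃ f : Fin n ⊕ Fin n → Fin 1,
        ∀ e ∈ crossEdges n, ¬ ∀ u ∈ e, ∀ v ∈ e, f u = f v) ∧
    ∀ p : ℝ, 2 ≤ p →
      lamMax 4 p (crossEdges n) (fun _ => 1) >
        (((n : ℝ) - 1) ^ 2 / (8 * (n : ℝ))) *
          |lamMin 4 p (crossEdges n) (fun _ => 1)| := by
  refine ⟨⟨⟨Sum.elim (fun _ => 0) (fun _ => 1), fun e he hmono => ?_⟩, ?_⟩, fun p hp => ?_⟩
  · obtain ⟨⟨a, ha⟩, ⟨b, hb⟩⟩ := exists_inl_mem_and_inr_mem he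
    simpa using hmono _ ha _ hb
  · rintro ⟨f, hf⟩
    have hpair : ({⟨0, by omega⟩, ⟨1, by omega⟩} : Finset (Fin n)).card = 2 :=
      card_pair (by simp [Fin.ext_iff])
    exact hf _ (disjSum_mem_crossEdges hpair hpair) fun _ _ _ _ => Subsingleton.elim _ _
  · have hp0 : 0 < p := by linarith
    have hn : (2 : ℝ) ≤ n := by exact_mod_cast h2
    set t := ((2 * n : ℝ)⁻¹) ^ p⁻¹
    have ht : 0 < t := by positivity
    have htp : t ^ p = (2 * n : ℝ)⁻¹ := Real.rpow_inv_rpow (by positivity) hp0.ne'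
    rw [lamMax_crossEdges h2 hp ht.le htp, gt_iff_lt]
    calc _ ≤ ((n - 1) ^ 2 / (8 * n)) * (6 * ((n - 1) * (n ^ 2 * t ^ 4))) :=
          mul_le_mul_of_nonneg_left (abs_lamMin_crossEdges_le h2 hp ht.le htp) (by positivity)
      _ < 6 * ((n - 1) ^ 2 * (n ^ 2 * t ^ 4)) := by
          field_simp
          nlinarith [pow_pos ht 4]

/-- Section 2 of the paper: for even `n ≥ 2`, the `4`-graph `G` of Section 2 is
`2`-chromatic (its vertex set can be partitioned into `2` sets neither of which
contains an edge, but not into `1` such set), and for every real `p ≥ 2`,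
`λ^(p)(G) > ((n-1)²/(8n)) · |λ_min^(p)(G)|`; hence the ratio
`λ^(p)(G)/|λ_min^(p)(G)|` grows with `n` and cannot be bounded above by a function
of the chromatic number and `p`. -/
theorem crossEdges_two_chromatic_ratio_unbounded (n : ℕ) (hn : Even n) (h2 : 2 ≤ n) :
    ((∃ f : Fin n ⊕ Fin n → Fin 2,
        ∀ e ∈ crossEdges n, ¬ ∀ u ∈ e, ∀ v ∈ e, f u = f v) ∧
      ¬ ∃ f : Fin n ⊕ Fin n → Fin 1,
        ∀ e ∈ crossEdges n, ¬ ∀ u ∈ e, ∀ v ∈ e, f u = f v) ∧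
    ∀ p : ℝ, 2 ≤ p →
      lamMax 4 p (crossEdges n) (fun _ => 1) >
        (((n : ℝ) - 1) ^ 2 / (8 * (n : ℝ))) *
          |lamMin 4 p (crossEdges n) (fun _ => 1)| :=
  crossEdges_two_chromatic_ratio_unbounded_general n h2
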